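/- arXiv:math/9810199 — 9 statements merged into one kernel-verified Lean document; each statement's English description precedes it below -/
import Mathlib

section
/- For all λ, τ ∈ ℂ with sinh(λ/2) ≠ 0 and cosh(λ/2) ≠ 0, the matrix T(λ,τ) is invertible (it has determinant 1) and satisfies the gluing relation T(λ,τ)⁻¹ · S(λ) · T(λ,τ) = S'(λ). -/
open Matrix

/-- `S(λ) = [[cosh λ, cosh λ + 1], [cosh λ − 1, cosh λ]]` -/
noncomputable def Smat (l : ℂ) : Matrix (Fin 2) (Fin 2) ℂ :=
  !![Complex.cosh l, Complex.cosh l + 1; Complex.cosh l - 1, Complex.cosh l]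

/-- `S'(λ) = [[cosh λ, cosh λ − 1], [cosh λ + 1, cosh λ]]` -/
noncomputable def Smat' (l : ℂ) : Matrix (Fin 2) (Fin 2) ℂ :=
  !![Complex.cosh l, Complex.cosh l - 1; Complex.cosh l + 1, Complex.cosh l]

/-- `T(λ,τ) = [[cosh(τ/2)·coth(λ/2), −sinh(τ/2)], [−sinh(τ/2), cosh(τ/2)·tanh(λ/2)]]` -/
noncomputable def Tmat (l τ : ℂ) : Matrix (Fin 2) (Fin 2) ℂ :=
  !![Complex.cosh (τ/2) * (Complex.cosh (l/2) / Complex.sinh (l/2)), -Complex.sinh (τ/2);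
     -Complex.sinh (τ/2), Complex.cosh (τ/2) * (Complex.sinh (l/2) / Complex.cosh (l/2))]

/-!
Write `a = cosh (λ/2)`, `b = sinh (λ/2)`. Then `cosh λ + 1 = 2a²` and `cosh λ - 1 = 2b²`, and
`T(λ,τ) = cosh (τ/2) • diag (a/b, b/a) - sinh (τ/2) • J` with `J` the coordinate swap.
Both `J` and `diag (a/b, b/a)` intertwine `S(λ)` with `S'(λ)`: conjugating by `J` exchanges the
off-diagonal entries, and conjugating by the diagonal matrix rescales them by `(a/b)^{±2}`, which
turns `2a²` into `2b²` and back. Hence `S T = T S'`, and `det T = cosh² (τ/2) - sinh² (τ/2) = 1`.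
-/

theorem Matrix.mul_swap_eq_swap_mul {R : Type*} [NonAssocSemiring R] (p q r s : R) :
    !![p, q; r, s] * !![0, 1; 1, 0] = !![0, 1; 1, 0] * !![s, r; q, p] := by
  simp

theorem Matrix.mul_diagonal_eq_diagonal_mul {R : Type*} [CommSemiring R] {p q r s q' r' d e : R}
    (hq : q * e = d * q') (hr : r * d = e * r') :
    !![p, q; r, s] * !![d, 0; 0, e] = !![d, 0; 0, e] * !![p, q'; r', s] := by
  simp [hq, hr, mul_comm]

theorem Matrix.inv_mul_mul_eq_of_mul_eq_mul {R n : Type*} [CommRing R] [Fintype n] [DecidableEq n]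
    {A M N : Matrix n n R} (hA : IsUnit A.det) (h : M * A = A * N) : A⁻¹ * M * A = N := by
  rw [Matrix.mul_assoc, h, ← Matrix.mul_assoc, nonsing_inv_mul _ hA, Matrix.one_mul]

namespace Complex

theorem cosh_add_one_eq (x : ℂ) : cosh x + 1 = 2 * cosh (x / 2) ^ 2 := by
  have h := cosh_two_mul (x / 2)
  rw [mul_div_cancel₀ x two_ne_zero] at h
  linear_combination h - cosh_sq (x / 2)

theorem cosh_sub_one_eq (x : ℂ) : cosh x - 1 = 2 * sinh (x / 2) ^ 2 := by
  have h := cosh_two_mul (x / 2)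
  rw [mul_div_cancel₀ x two_ne_zero] at h
  linear_combination h + cosh_sq (x / 2)

end Complex

open Complex

theorem Tmat_eq_smul_sub_smul (l τ : ℂ) :
    Tmat l τ = cosh (τ / 2) • !![cosh (l / 2) / sinh (l / 2), 0; 0, sinh (l / 2) / cosh (l / 2)]
      - sinh (τ / 2) • !![0, 1; 1, 0] := by
  ext i j
  fin_cases i <;> fin_cases j <;> simp [Tmat]

theorem det_Tmat (l τ : ℂ) (hs : sinh (l / 2) ≠ 0) (hc : cosh (l / 2) ≠ 0) :
    (Tmat l τ).det = 1 := by
  rw [Tmat, det_fin_two_of]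
  field_simp
  linear_combination cosh_sq_sub_sinh_sq (τ / 2)

theorem Smat_mul_Tmat (l τ : ℂ) (hs : sinh (l / 2) ≠ 0) (hc : cosh (l / 2) ≠ 0) :
    Smat l * Tmat l τ = Tmat l τ * Smat' l := by
  have hD : Smat l * !![cosh (l / 2) / sinh (l / 2), 0; 0, sinh (l / 2) / cosh (l / 2)] =
      !![cosh (l / 2) / sinh (l / 2), 0; 0, sinh (l / 2) / cosh (l / 2)] * Smat' l := by
    apply Matrix.mul_diagonal_eq_diagonal_mul <;>
    · rw [cosh_add_one_eq, cosh_sub_one_eq]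
      field_simp
  have hJ : Smat l * !![0, 1; 1, 0] = !![0, 1; 1, 0] * Smat' l :=
    Matrix.mul_swap_eq_swap_mul _ _ _ _
  rw [Tmat_eq_smul_sub_smul, Matrix.mul_sub, Matrix.sub_mul, Matrix.mul_smul, Matrix.mul_smul,
    Matrix.smul_mul, Matrix.smul_mul, hD, hJ]

theorem gluing_relation (l τ : ℂ) (h1 : Complex.sinh (l/2) ≠ 0)
    (h2 : Complex.cosh (l/2) ≠ 0) :
    (Tmat l τ).det = 1 ∧ (Tmat l τ)⁻¹ * Smat l * Tmat l τ = Smat' l := by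
  have hdet := det_Tmat l τ h1 h2
  refine ⟨hdet, Matrix.inv_mul_mul_eq_of_mul_eq_mul ?_ (Smat_mul_Tmat l τ h1 h2)⟩
  rw [hdet]
  exact isUnit_one
end

section
/- Let λ > 0 and τ be real. Then the Möbius transformation determined by T(λ,τ) sends the point i·tanh(λ/2) to the point i·coth(λ/2)·(sech τ + i·tanh τ), and the hyperbolic distance in the upper half-plane between i·coth(λ/2) and this image point equals |τ|. -/
/-!
Write `a = cosh (τ/2)`, `b = sinh (τ/2)`. Since `coth (λ/2) · tanh (λ/2) = 1`, the matrix `T(λ,τ)`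
sends `i tanh (λ/2)` to `coth (λ/2) · (i a - b) / (a - i b) = coth (λ/2) · i (a + i b)² / (a² + b²)`,
and the double angle formulas turn `(a + i b)² / (a² + b²)` into `(1 + i sinh τ) / cosh τ`.
The image point is `coth (λ/2) · (-tanh τ + i sech τ)`; as `tanh² + sech² = 1`, its squared
Euclidean distance to `i coth (λ/2)` is `2 coth² (λ/2) (1 - sech τ)`, and the hyperbolic distance
formula collapses to `cosh τ`.
-/

open Matrix

open Complex

noncomputable def moebius (M : Matrix (Fin 2) (Fin 2) ℂ) (z : ℂ) : ℂ :=
  (M 0 0 * z + M 0 1) / (M 1 0 * z + M 1 1)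

/-- For `z w ∈ ℍ`, this is `cosh` of their hyperbolic distance (`UpperHalfPlane.cosh_dist`). -/
noncomputable def coshDist (z w : ℂ) : ℝ :=
  1 + ‖z - w‖ ^ 2 / (2 * z.im * w.im)

theorem I_mul_cosh_half_sub_sinh_half_div (τ : ℂ) (h : cosh τ ≠ 0) :
    (I * cosh (τ / 2) - sinh (τ / 2)) / (cosh (τ / 2) - I * sinh (τ / 2)) =
      I * (1 / cosh τ + I * tanh τ) := by
  set a := cosh (τ / 2)
  set b := sinh (τ / 2)
  have hτ : τ = 2 * (τ / 2) := by ring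
  have hcosh : cosh τ = (a - I * b) * (a + I * b) := by
    rw [hτ, cosh_two_mul]; linear_combination b ^ 2 * I_sq
  have hsq : (a + I * b) ^ 2 = 1 + I * sinh τ := by
    rw [hτ, sinh_two_mul]; linear_combination b ^ 2 * I_sq + cosh_sq_sub_sinh_sq (τ / 2)
  have hplus : a + I * b ≠ 0 := right_ne_zero_of_mul (hcosh ▸ h)
  calc (I * a - b) / (a - I * b) = I * (a + I * b) / (a - I * b) := by
        congr 1; linear_combination -b * I_sq
    _ = I * ((a + I * b) ^ 2 / ((a - I * b) * (a + I * b))) := by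
        rw [sq, mul_div_mul_right _ _ hplus, mul_div_assoc]
    _ = I * (1 / cosh τ + I * tanh τ) := by
        rw [← hcosh, hsq, tanh_eq_sinh_div_cosh]; ring

theorem moebius_Tmat_I_mul_tanh (l τ : ℂ) (hs : sinh (l / 2) ≠ 0) (hc : cosh (l / 2) ≠ 0)
    (hτ : cosh τ ≠ 0) :
    moebius (Tmat l τ) (I * tanh (l / 2)) =
      I * (cosh (l / 2) / sinh (l / 2)) * (1 / cosh τ + I * tanh τ) := by
  have hnum : Tmat l τ 0 0 * (I * tanh (l / 2)) + Tmat l τ 0 1 =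
      I * cosh (τ / 2) - sinh (τ / 2) := by
    simp only [Tmat, of_apply, cons_val', cons_val_zero, cons_val_one, empty_val',
      cons_val_fin_one, tanh_eq_sinh_div_cosh]
    field_simp; ring
  have hden : Tmat l τ 1 0 * (I * tanh (l / 2)) + Tmat l τ 1 1 =
      (cosh (τ / 2) - I * sinh (τ / 2)) * tanh (l / 2) := by
    simp only [Tmat, of_apply, cons_val', cons_val_zero, cons_val_one, empty_val',
      cons_val_fin_one, tanh_eq_sinh_div_cosh]
    ring
  rw [moebius, hnum, hden, ← div_div, I_mul_cosh_half_sub_sinh_half_div τ hτ,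
    tanh_eq_sinh_div_cosh (l / 2), div_div_eq_mul_div]
  ring

theorem coshDist_I_mul_of_twist (k τ : ℝ) (hk : k ≠ 0) :
    coshDist (I * k) (I * k * (1 / Real.cosh τ + I * Real.tanh τ)) = Real.cosh τ := by
  have hC := (Real.cosh_pos τ).ne'
  rw [coshDist, show (1 / (Real.cosh τ : ℂ)) = ((1 / Real.cosh τ : ℝ) : ℂ) by push_cast; rfl,
    Complex.sq_norm, Complex.normSq_apply]
  simp only [sub_re, sub_im, mul_re, mul_im, add_re, add_im, I_re, I_im, ofReal_re, ofReal_im,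
    zero_mul, mul_zero, sub_zero, zero_sub, add_zero, zero_add, one_mul, neg_neg,
    Real.tanh_eq_sinh_div_cosh]
  field_simp
  linear_combination -Real.cosh_sq_sub_sinh_sq τ

/-- The Möbius transformation `T(λ,τ)` sends `i·tanh(λ/2)` to
`i·coth(λ/2)·(sech τ + i·tanh τ)`, and the hyperbolic distance in the upper half-plane
(characterised by `cosh(dist(z,w)) = 1 + |z − w|²/(2·Im z·Im w)`) between `i·coth(λ/2)`
and this image point equals `|τ|`. -/
theorem twist_parameter_is_distance (l τ : ℝ) (hl : 0 < l) :
    (Tmat l τ 0 0 * (Complex.I * Real.tanh (l/2)) + Tmat l τ 0 1) /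
      (Tmat l τ 1 0 * (Complex.I * Real.tanh (l/2)) + Tmat l τ 1 1) =
      Complex.I * (Real.cosh (l/2) / Real.sinh (l/2)) *
        ((1 : ℂ) / Real.cosh τ + Complex.I * Real.tanh τ) ∧
    Real.cosh |τ| =
      1 + ‖(Complex.I * (Real.cosh (l/2) / Real.sinh (l/2))) -
            Complex.I * (Real.cosh (l/2) / Real.sinh (l/2)) *
              ((1 : ℂ) / Real.cosh τ + Complex.I * Real.tanh τ)‖ ^ 2 /
        (2 * (Complex.I * ((Real.cosh (l/2) : ℂ) / Real.sinh (l/2))).im *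
          (Complex.I * (Real.cosh (l/2) / Real.sinh (l/2)) *
            ((1 : ℂ) / Real.cosh τ + Complex.I * Real.tanh τ)).im) := by
  have hs : Real.sinh (l / 2) ≠ 0 := (Real.sinh_pos_iff.2 (half_pos hl)).ne'
  have hc : Real.cosh (l / 2) ≠ 0 := (Real.cosh_pos _).ne'
  constructor
  · have hτ : cosh (τ : ℂ) ≠ 0 := by exact_mod_cast (Real.cosh_pos τ).ne'
    have hmoeb := moebius_Tmat_I_mul_tanh l τ (by exact_mod_cast hs) (by exact_mod_cast hc) hτ
    push_cast
    exact hmoeb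
  · have hdist := coshDist_I_mul_of_twist _ τ (div_ne_zero hc hs)
    rw [coshDist] at hdist
    rw [Real.cosh_abs]
    exact_mod_cast hdist.symm
end

section
/- Let a, x₁, x₂ ∈ ℂ with a ≠ 0, x₁ ≠ 1, x₂ ≠ 1 and x₁ ≠ x₂, and set A = [[a, 0], [0, 1/a]] and B = [[x₁(x₂ − 1), x₁ − x₂], [x₂ − 1, x₁ − x₂]]. Then tr(A·B·A⁻¹·B⁻¹) = −2 if and only if (a²)² − (4x₁ − 2)·a² + 1 = 0, if and only if a² = 2x₁ − 1 + 2√(x₁(x₁ − 1)) or a² = 2x₁ − 1 − 2√(x₁(x₁ − 1)), where √ denotes a fixed complex square root. -/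
open Matrix

theorem trace_commutator_eq_neg_two_iff (a x₁ x₂ : ℂ) (ha : a ≠ 0) (h1 : x₁ ≠ 1)
    (h2 : x₂ ≠ 1) (h12 : x₁ ≠ x₂) (s : ℂ) (hs : s ^ 2 = x₁ * (x₁ - 1)) :
    (((!![a, 0; 0, 1/a] : Matrix (Fin 2) (Fin 2) ℂ) *
        !![x₁ * (x₂ - 1), x₁ - x₂; x₂ - 1, x₁ - x₂] *
        (!![a, 0; 0, 1/a] : Matrix (Fin 2) (Fin 2) ℂ)⁻¹ *
        (!![x₁ * (x₂ - 1), x₁ - x₂; x₂ - 1, x₁ - x₂] : Matrix (Fin 2) (Fin 2) ℂ)⁻¹).trace = -2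
      ↔ (a^2)^2 - (4 * x₁ - 2) * a^2 + 1 = 0) ∧
    ((a^2)^2 - (4 * x₁ - 2) * a^2 + 1 = 0
      ↔ (a^2 = 2 * x₁ - 1 + 2 * s ∨ a^2 = 2 * x₁ - 1 - 2 * s)) := by
  have h1' : x₁ - 1 ≠ 0 := sub_ne_zero.mpr h1
  have h2' : x₂ - 1 ≠ 0 := sub_ne_zero.mpr h2
  have h12' : x₁ - x₂ ≠ 0 := sub_ne_zero.mpr h12
  have hA : (!![a, 0; 0, 1/a] : Matrix (Fin 2) (Fin 2) ℂ)⁻¹ = !![1/a, 0; 0, a] := by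
    apply inv_eq_right_inv
    ext i j
    fin_cases i <;> fin_cases j <;>
      simp [Matrix.mul_apply, Fin.sum_univ_two] <;> field_simp
  have hd : ((x₁ - 1) * (x₂ - 1) * (x₁ - x₂)) ≠ 0 := by
    exact mul_ne_zero (mul_ne_zero h1' h2') h12'
  have hB : (!![x₁ * (x₂ - 1), x₁ - x₂; x₂ - 1, x₁ - x₂] : Matrix (Fin 2) (Fin 2) ℂ)⁻¹ =
      ((x₁ - 1) * (x₂ - 1) * (x₁ - x₂))⁻¹ •
        !![x₁ - x₂, -(x₁ - x₂); -(x₂ - 1), x₁ * (x₂ - 1)] := by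
    apply inv_eq_right_inv
    ext i j
    fin_cases i <;> fin_cases j <;>
      simp [Matrix.mul_apply, Fin.sum_univ_two] <;> field_simp <;> ring
  rw [hA, hB]
  have hT : ((!![a, 0; 0, 1/a] : Matrix (Fin 2) (Fin 2) ℂ) *
        !![x₁ * (x₂ - 1), x₁ - x₂; x₂ - 1, x₁ - x₂] * !![1/a, 0; 0, a] *
        (((x₁ - 1) * (x₂ - 1) * (x₁ - x₂))⁻¹ •
          !![x₁ - x₂, -(x₁ - x₂); -(x₂ - 1), x₁ * (x₂ - 1)])).trace
      = (2 * x₁ - a^2 - (a^2)⁻¹) / (x₁ - 1) := by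
    rw [Matrix.mul_smul, Matrix.trace_smul, show (!![a, 0; 0, 1/a] : Matrix (Fin 2) (Fin 2) ℂ) *
        !![x₁ * (x₂ - 1), x₁ - x₂; x₂ - 1, x₁ - x₂] * !![1/a, 0; 0, a] *
        !![x₁ - x₂, -(x₁ - x₂); -(x₂ - 1), x₁ * (x₂ - 1)]
      = !![a * (x₁ * (x₂ - 1)) * (1/a) * (x₁ - x₂) + a * (x₁ - x₂) * a * (-(x₂ - 1)),
          a * (x₁ * (x₂ - 1)) * (1/a) * (-(x₁ - x₂)) + a * (x₁ - x₂) * a * (x₁ * (x₂ - 1));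
          1/a * (x₂ - 1) * (1/a) * (x₁ - x₂) + 1/a * (x₁ - x₂) * a * (-(x₂ - 1)),
          1/a * (x₂ - 1) * (1/a) * (-(x₁ - x₂)) + 1/a * (x₁ - x₂) * a * (x₁ * (x₂ - 1))] from by
        ext i j
        fin_cases i <;> fin_cases j <;>
          simp [Matrix.mul_apply, Fin.sum_univ_two] <;> ring]
    rw [Matrix.trace_fin_two_of, smul_eq_mul]
    field_simp
    ring
  rw [hT]
  constructor
  · have ha2 : a ^ 2 ≠ 0 := pow_ne_zero 2 ha
    rw [eq_neg_iff_add_eq_zero]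
    have key : (2 * x₁ - a^2 - (a^2)⁻¹) / (x₁ - 1) + 2
        = ((a^2)^2 - (4 * x₁ - 2) * a^2 + 1) * (-(a^2 * (x₁ - 1))⁻¹) := by
      field_simp
      ring
    rw [key, mul_eq_zero]
    simp [ha2, h1', sub_eq_zero]
  · constructor
    · intro h
      have factored : (a^2 - (2 * x₁ - 1 + 2 * s)) * (a^2 - (2 * x₁ - 1 - 2 * s)) = 0 := by
        linear_combination h - 4 * hs
      rcases mul_eq_zero.mp factored with h' | h'
      · exact Or.inl (by linear_combination h')
      · exact Or.inr (by linear_combination h')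
    · rintro (h | h)
      · linear_combination (a^2 - (2*x₁-1) + 2*s) * h + 4 * hs
      · linear_combination (a^2 - (2*x₁-1) - 2*s) * h + 4 * hs
end

section
/- Let λ, τ ∈ ℂ with sinh λ ≠ 0, cosh λ ≠ 0 and cosh λ ≠ 1, and set R = [[cosh λ/(1 − cosh λ), −coth λ], [1/(1 − cosh λ), csch λ]], S₀ = [[e^λ, 0], [0, e^{−λ}]], and T₀ = [[coth λ·e^{−τ/2}, coth λ·e^{τ/2}], [csch λ·sech λ·e^{−τ/2}, coth λ·e^{τ/2}]]. Then R·S'(λ) = S₀·R and R·T(λ,τ) = T₀·R, i.e. conjugation by R carries S'(λ) to the diagonal matrix S₀ and T(λ,τ) to T₀. -/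
open Matrix

/-- `R = [[cosh λ/(1 − cosh λ), −coth λ], [1/(1 − cosh λ), csch λ]]` -/
noncomputable def Rmat (l : ℂ) : Matrix (Fin 2) (Fin 2) ℂ :=
  !![Complex.cosh l / (1 - Complex.cosh l), -(Complex.cosh l / Complex.sinh l);
     1 / (1 - Complex.cosh l), 1 / Complex.sinh l]

/-- `S₀ = [[e^λ, 0], [0, e^{−λ}]]` -/
noncomputable def S0mat (l : ℂ) : Matrix (Fin 2) (Fin 2) ℂ :=
  !![Complex.exp l, 0; 0, Complex.exp (-l)]

/-- `T₀ = [[coth λ·e^{−τ/2}, coth λ·e^{τ/2}], [csch λ·sech λ·e^{−τ/2}, coth λ·e^{τ/2}]]` -/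
noncomputable def T0mat (l τ : ℂ) : Matrix (Fin 2) (Fin 2) ℂ :=
  !![(Complex.cosh l / Complex.sinh l) * Complex.exp (-τ/2),
     (Complex.cosh l / Complex.sinh l) * Complex.exp (τ/2);
     (1 / Complex.sinh l) * (1 / Complex.cosh l) * Complex.exp (-τ/2),
     (Complex.cosh l / Complex.sinh l) * Complex.exp (τ/2)]

/-!
After the half-angle identities `coth (λ/2) = (cosh λ + 1) / sinh λ` and
`tanh (λ/2) = (cosh λ - 1) / sinh λ`, and `e^{±x} = cosh x ± sinh x`, every entry is a rational
function of `c = cosh λ`, `s = sinh λ`, `p = cosh (τ/2)` and `q = sinh (τ/2)`. Both identities then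
hold in any field modulo the single relation `s² = c² - 1`; the one for `T` is linear in `(p, q)`.
-/

-- Both half-angle identities hold unconditionally: when a denominator vanishes, so do both sides.
theorem Complex.cosh_half_div_sinh_half (x : ℂ) :
    Complex.cosh (x / 2) / Complex.sinh (x / 2) = (Complex.cosh x + 1) / Complex.sinh x := by
  obtain ⟨y, rfl⟩ : ∃ y, x = 2 * y := ⟨x / 2, by ring⟩
  rw [mul_div_cancel_left₀ y two_ne_zero, Complex.cosh_two_mul, Complex.sinh_two_mul]
  by_cases hc : Complex.cosh y = 0
  · simp [hc]
  · rw [Complex.sinh_sq, show Complex.cosh y ^ 2 + (Complex.cosh y ^ 2 - 1) + 1 =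
      2 * Complex.cosh y * Complex.cosh y by ring, mul_div_mul_right _ _ hc,
      mul_div_mul_left _ _ two_ne_zero]

theorem Complex.sinh_half_div_cosh_half (x : ℂ) :
    Complex.sinh (x / 2) / Complex.cosh (x / 2) = (Complex.cosh x - 1) / Complex.sinh x := by
  obtain ⟨y, rfl⟩ : ∃ y, x = 2 * y := ⟨x / 2, by ring⟩
  rw [mul_div_cancel_left₀ y two_ne_zero, Complex.cosh_two_mul, Complex.sinh_two_mul]
  by_cases hs : Complex.sinh y = 0
  · simp [hs]
  · rw [Complex.cosh_sq, show Complex.sinh y ^ 2 + 1 + Complex.sinh y ^ 2 - 1 =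
      2 * Complex.sinh y * Complex.sinh y by ring,
      mul_div_mul_left _ _ (mul_ne_zero two_ne_zero hs)]

section rMatrix

variable {K : Type*} [Field K]

/-- `Rmat l = rMatrix (cosh l) (sinh l)`. -/
def rMatrix (c s : K) : Matrix (Fin 2) (Fin 2) K :=
  !![c / (1 - c), -(c / s); 1 / (1 - c), 1 / s]

theorem rMatrix_mul_eq_diagonal_mul {c s : K} (hs : s ≠ 0) (hc : c ≠ 1)
    (hcs : s ^ 2 = c ^ 2 - 1) :
    rMatrix c s * !![c, c - 1; c + 1, c] = !![c + s, 0; 0, c - s] * rMatrix c s := by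
  have hc' : 1 - c ≠ 0 := sub_ne_zero.2 hc.symm
  rw [rMatrix, mul_fin_two, mul_fin_two]
  simp only [EmbeddingLike.apply_eq_iff_eq, vecCons_inj, and_true]
  refine ⟨⟨?_, ?_⟩, ?_, ?_⟩ <;> field_simp
  · linear_combination -c * hcs
  · ring
  · linear_combination hcs
  · ring

theorem rMatrix_mul_eq_mul_rMatrix {c s : K} (p q : K) (hs : s ≠ 0) (hc₀ : c ≠ 0) (hc : c ≠ 1)
    (hcs : s ^ 2 = c ^ 2 - 1) :
    rMatrix c s * !![p * ((c + 1) / s), -q; -q, p * ((c - 1) / s)] =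
      !![c / s * (p - q), c / s * (p + q); 1 / s * (1 / c) * (p - q), c / s * (p + q)] *
        rMatrix c s := by
  have hc' : 1 - c ≠ 0 := sub_ne_zero.2 hc.symm
  rw [rMatrix, mul_fin_two, mul_fin_two]
  simp only [EmbeddingLike.apply_eq_iff_eq, vecCons_inj, and_true]
  refine ⟨⟨?_, ?_⟩, ?_, ?_⟩ <;> field_simp
  · ring
  · linear_combination -q * hcs
  · ring
  · linear_combination -q * hcs

end rMatrix

theorem conjugation_by_R (l τ : ℂ) (h1 : Complex.sinh l ≠ 0) (h2 : Complex.cosh l ≠ 0)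
    (h3 : Complex.cosh l ≠ 1) :
    Rmat l * Smat' l = S0mat l * Rmat l ∧ Rmat l * Tmat l τ = T0mat l τ * Rmat l := by
  have hR : Rmat l = rMatrix (Complex.cosh l) (Complex.sinh l) := rfl
  have hsq := Complex.sinh_sq l
  constructor
  · rw [hR, Smat', S0mat, ← Complex.cosh_add_sinh l, ← Complex.cosh_sub_sinh l]
    exact rMatrix_mul_eq_diagonal_mul h1 h3 hsq
  · rw [hR, Tmat, T0mat, Complex.cosh_half_div_sinh_half, Complex.sinh_half_div_cosh_half, neg_div,
      ← Complex.cosh_add_sinh (τ / 2), ← Complex.cosh_sub_sinh (τ / 2)]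
    exact rMatrix_mul_eq_mul_rMatrix _ _ h1 h2 h3 hsq
end

section
/- Let λ, τ ∈ ℂ with sinh(λ/2) ≠ 0, cosh(λ/2) ≠ 0, cosh(τ/2) ≠ 0 and tanh(λ/2) ≠ 0, and set ι₁ = [[sinh(τ/2), cosh(τ/2)·coth(λ/2)], [−cosh(τ/2)·tanh(λ/2), −sinh(τ/2)]] and ι₂ = [[0, −1], [1, 0]]. Then ι₁² = −I, T(λ,τ) = ι₁·ι₂, and the fixed points of the Möbius transformation determined by ι₁ are exactly the two points (−sinh(τ/2) ± i)/(cosh(τ/2)·tanh(λ/2)). -/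
/-!
For a traceless `M = [[a, b], [c, -a]]`, Cayley–Hamilton reads `M² = -det M • 1`, and the
fixed-point equation `c z² - 2 a z - b = 0` has discriminant `-4 det M`, so for `c ≠ 0` the fixed
points are `(a ± √(-det M)) / c`. The matrix `ι₁` is traceless, and since `coth · tanh = 1` its
determinant is `cosh² (τ/2) - sinh² (τ/2) = 1`.
-/

open Matrix

/-- `ι₁ = [[sinh(τ/2), cosh(τ/2)·coth(λ/2)], [−cosh(τ/2)·tanh(λ/2), −sinh(τ/2)]]` -/
noncomputable def iota1 (l τ : ℂ) : Matrix (Fin 2) (Fin 2) ℂ :=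
  !![Complex.sinh (τ/2), Complex.cosh (τ/2) * (Complex.cosh (l/2) / Complex.sinh (l/2));
     -(Complex.cosh (τ/2) * (Complex.sinh (l/2) / Complex.cosh (l/2))), -Complex.sinh (τ/2)]

/-- `ι₂ = [[0, −1], [1, 0]]` -/
def iota2 : Matrix (Fin 2) (Fin 2) ℂ := !![0, -1; 1, 0]

namespace Matrix

theorem mul_self_eq_neg_det_smul_one_of_trace_eq_zero {R : Type*} [CommRing R]
    {M : Matrix (Fin 2) (Fin 2) R} (htr : M.trace = 0) : M * M = -M.det • 1 := by
  rw [trace_fin_two, add_eq_zero_iff_eq_neg'] at htr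
  ext i j
  fin_cases i <;> fin_cases j <;>
    simp [mul_apply, det_fin_two, htr] <;> ring

theorem fixedPoint_iff_of_trace_eq_zero {K : Type*} [Field K] [NeZero (2 : K)]
    {M : Matrix (Fin 2) (Fin 2) K} (htr : M.trace = 0) (hc : M 1 0 ≠ 0) {s : K}
    (hs : -M.det = s * s) (z : K) :
    M 1 0 * z ^ 2 + M 1 1 * z = M 0 0 * z + M 0 1 ↔
      z = (M 0 0 + s) / M 1 0 ∨ z = (M 0 0 - s) / M 1 0 := by
  rw [trace_fin_two, add_eq_zero_iff_eq_neg'] at htr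
  have hdiscrim : discrim (M 1 0) (-2 * M 0 0) (-M 0 1) = (2 * s) * (2 * s) := by
    rw [discrim, ← mul_mul_mul_comm, ← hs, det_fin_two, htr]
    ring
  calc M 1 0 * z ^ 2 + M 1 1 * z = M 0 0 * z + M 0 1
        ↔ M 1 0 * (z * z) + -2 * M 0 0 * z + -M 0 1 = 0 := by
          rw [htr, ← sub_eq_zero]
          ring_nf
    _ ↔ _ := by
          rw [quadratic_eq_zero_iff hc hdiscrim, neg_mul, neg_neg, ← mul_add, ← mul_sub,
            mul_div_mul_left _ _ two_ne_zero, mul_div_mul_left _ _ two_ne_zero]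

end Matrix

open Complex

theorem trace_iota1 (l τ : ℂ) : (iota1 l τ).trace = 0 := by
  simp [iota1, trace_fin_two]

theorem det_iota1 {l : ℂ} (hsinh : sinh (l/2) ≠ 0) (hcosh : cosh (l/2) ≠ 0) (τ : ℂ) :
    (iota1 l τ).det = 1 := by
  rw [iota1, det_fin_two_of, ← cosh_sq_sub_sinh_sq (τ/2)]
  field_simp
  ring

theorem Tmat_eq_iota1_mul_iota2 (l τ : ℂ) : Tmat l τ = iota1 l τ * iota2 := by
  simp [Tmat, iota1, iota2]

theorem T_decomposition_into_half_turns_general (l τ : ℂ) (h1 : Complex.sinh (l/2) ≠ 0)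
    (h2 : Complex.cosh (l/2) ≠ 0) (h3 : Complex.cosh (τ/2) ≠ 0) :
    iota1 l τ * iota1 l τ = -1 ∧
    Tmat l τ = iota1 l τ * iota2 ∧
    (∀ z : ℂ, iota1 l τ 1 0 * z ^ 2 + iota1 l τ 1 1 * z = iota1 l τ 0 0 * z + iota1 l τ 0 1 ↔
      (z = (-Complex.sinh (τ/2) + Complex.I) /
            (Complex.cosh (τ/2) * (Complex.sinh (l/2) / Complex.cosh (l/2))) ∨
       z = (-Complex.sinh (τ/2) - Complex.I) /
            (Complex.cosh (τ/2) * (Complex.sinh (l/2) / Complex.cosh (l/2))))) := by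
  have hdet := det_iota1 h1 h2 τ
  refine ⟨?_, Tmat_eq_iota1_mul_iota2 l τ, fun z => ?_⟩
  · rw [mul_self_eq_neg_det_smul_one_of_trace_eq_zero (trace_iota1 l τ), hdet, neg_one_smul]
  · have hc : iota1 l τ 1 0 ≠ 0 := by
      simpa [iota1] using mul_ne_zero h3 (div_ne_zero h1 h2)
    have hs : -(iota1 l τ).det = I * I := by rw [hdet, I_mul_I]
    rw [fixedPoint_iff_of_trace_eq_zero (trace_iota1 l τ) hc hs]
    simp only [iota1, of_apply, cons_val', cons_val_zero, cons_val_one, empty_val',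
      cons_val_fin_one]
    rw [div_neg, div_neg, ← neg_div, ← neg_div, neg_add', neg_sub', sub_neg_eq_add, or_comm]

theorem T_decomposition_into_half_turns (l τ : ℂ) (h1 : Complex.sinh (l/2) ≠ 0)
    (h2 : Complex.cosh (l/2) ≠ 0) (h3 : Complex.cosh (τ/2) ≠ 0)
    (h4 : Complex.sinh (l/2) / Complex.cosh (l/2) ≠ 0) :
    iota1 l τ * iota1 l τ = -1 ∧
    Tmat l τ = iota1 l τ * iota2 ∧
    (∀ z : ℂ, iota1 l τ 1 0 * z ^ 2 + iota1 l τ 1 1 * z = iota1 l τ 0 0 * z + iota1 l τ 0 1 ↔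
      (z = (-Complex.sinh (τ/2) + Complex.I) /
            (Complex.cosh (τ/2) * (Complex.sinh (l/2) / Complex.cosh (l/2))) ∨
       z = (-Complex.sinh (τ/2) - Complex.I) /
            (Complex.cosh (τ/2) * (Complex.sinh (l/2) / Complex.cosh (l/2))))) :=
  T_decomposition_into_half_turns_general l τ h1 h2 h3
end

section
/- For all λ, τ ∈ ℂ with sinh(λ/2) ≠ 0, cosh(λ/2) ≠ 0 and sinh λ ≠ 0, and every integer m, tr(S(λ)^{−m} · T(λ,τ)) = 2·cosh(τ/2 + mλ)·coth(λ). In particular, tr(T(λ,τ)) = cosh(τ/2)·(coth(λ/2) + tanh(λ/2)) = 2·cosh(τ/2)·coth(λ). -/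
open Matrix

/-!
Writing `S(λ) = cosh λ · 1 + sinh λ · J` with `J = (sinh λ)⁻¹ · [[0, cosh λ + 1], [cosh λ − 1, 0]]`,
one has `J² = 1` because `cosh² λ − 1 = sinh² λ`. Hence `x ↦ cosh x · 1 + sinh x · J` is a
homomorphism from `(ℂ, +)` (it is `x ↦ exp (x J)`), and `S(λ)^n = cosh(nλ) · 1 + sinh(nλ) · J`
for every integer `n`. Taking the trace against `T` and using `tr T = 2 cosh(τ/2) coth λ`,
`tr (J T) = −2 sinh(τ/2) coth λ` leaves the addition formula for `cosh`.
-/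

open Complex

section Hyperbolic

variable {A : Type*} [Ring A] [Algebra ℂ A]

noncomputable def hyperbolicHom (J : A) (hJ : J * J = 1) : Multiplicative ℂ →* A where
  toFun x := cosh x.toAdd • 1 + sinh x.toAdd • J
  map_one' := by simp
  map_mul' x y := by
    simp only [toAdd_mul, cosh_add, sinh_add, add_mul, mul_add, smul_mul_smul, one_mul, mul_one,
      hJ, add_smul]
    abel

theorem hyperbolicHom_apply (J : A) (hJ : J * J = 1) (x : ℂ) :
    hyperbolicHom J hJ (Multiplicative.ofAdd x) = cosh x • 1 + sinh x • J :=
  rfl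

end Hyperbolic

theorem Matrix.cosh_smul_one_add_sinh_smul_zpow {n : Type*} [Fintype n] [DecidableEq n]
    {J : Matrix n n ℂ} (hJ : J * J = 1) (x : ℂ) (k : ℤ) :
    (cosh x • 1 + sinh x • J) ^ k = cosh (k * x) • 1 + sinh (k * x) • J := by
  let u := (hyperbolicHom J hJ).toHomUnits (Multiplicative.ofAdd x)
  calc (cosh x • 1 + sinh x • J) ^ k = ((u ^ k : (Matrix n n ℂ)ˣ) : Matrix n n ℂ) :=
        (coe_units_zpow u k).symm
    _ = hyperbolicHom J hJ (Multiplicative.ofAdd (k • x)) := by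
        rw [← map_zpow, ← ofAdd_zsmul]; rfl
    _ = _ := by rw [hyperbolicHom_apply, zsmul_eq_mul]

noncomputable def Jmat (l : ℂ) : Matrix (Fin 2) (Fin 2) ℂ :=
  (sinh l)⁻¹ • !![0, cosh l + 1; cosh l - 1, 0]

theorem Jmat_mul_self {l : ℂ} (hl : sinh l ≠ 0) : Jmat l * Jmat l = 1 := by
  have key : (cosh l + 1) * (cosh l - 1) = sinh l * sinh l := by
    linear_combination cosh_sq_sub_sinh_sq l
  ext i j
  fin_cases i <;> fin_cases j <;> simp [Jmat]
  all_goals field_simp; linear_combination key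

theorem Smat_eq {l : ℂ} (hl : sinh l ≠ 0) : Smat l = cosh l • 1 + sinh l • Jmat l := by
  ext i j
  fin_cases i <;> fin_cases j <;> simp [Smat, Jmat, hl]

theorem Smat_zpow {l : ℂ} (hl : sinh l ≠ 0) (k : ℤ) :
    Smat l ^ k = cosh (k * l) • 1 + sinh (k * l) • Jmat l := by
  rw [Smat_eq hl, cosh_smul_one_add_sinh_smul_zpow (Jmat_mul_self hl)]

theorem cosh_div_sinh_half_add_sinh_div_cosh_half (l : ℂ) :
    cosh (l/2) / sinh (l/2) + sinh (l/2) / cosh (l/2) = 2 * (cosh l / sinh l) := by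
  have hc : cosh l = cosh (l/2) ^ 2 + sinh (l/2) ^ 2 := by
    rw [← cosh_two_mul, mul_div_cancel₀ l two_ne_zero]
  have hs : sinh l = 2 * sinh (l/2) * cosh (l/2) := by
    rw [← sinh_two_mul, mul_div_cancel₀ l two_ne_zero]
  rw [hc, hs]
  -- if a half-angle factor vanishes, both sides are `0` because `x / 0 = 0`
  by_cases h0 : sinh (l/2) = 0
  · simp [h0]
  by_cases h0' : cosh (l/2) = 0
  · simp [h0']
  field_simp

theorem trace_Tmat (l τ : ℂ) :
    (Tmat l τ).trace =
      cosh (τ/2) * (cosh (l/2) / sinh (l/2) + sinh (l/2) / cosh (l/2)) := by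
  rw [Tmat, trace_fin_two_of]
  ring

theorem trace_Tmat_eq (l τ : ℂ) :
    (Tmat l τ).trace = 2 * cosh (τ/2) * (cosh l / sinh l) := by
  rw [trace_Tmat, cosh_div_sinh_half_add_sinh_div_cosh_half]
  ring

theorem trace_Jmat_mul_Tmat (l τ : ℂ) :
    (Jmat l * Tmat l τ).trace = -2 * sinh (τ/2) * (cosh l / sinh l) := by
  simp [Jmat, Tmat, trace_fin_two]
  ring

theorem trace_S_power_T_general (l τ : ℂ) (h3 : Complex.sinh l ≠ 0) (m : ℤ) :
    (Smat l ^ (-m) * Tmat l τ).trace =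
      2 * Complex.cosh (τ/2 + m * l) * (Complex.cosh l / Complex.sinh l) ∧
    (Tmat l τ).trace =
      Complex.cosh (τ/2) *
        (Complex.cosh (l/2) / Complex.sinh (l/2) + Complex.sinh (l/2) / Complex.cosh (l/2)) ∧
    (Tmat l τ).trace = 2 * Complex.cosh (τ/2) * (Complex.cosh l / Complex.sinh l) := by
  refine ⟨?_, trace_Tmat l τ, trace_Tmat_eq l τ⟩
  rw [Smat_zpow h3, add_mul, trace_add, smul_mul, one_mul, smul_mul, trace_smul, trace_smul,
    trace_Tmat_eq, trace_Jmat_mul_Tmat, Int.cast_neg, neg_mul, cosh_neg, sinh_neg, cosh_add]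
  simp only [smul_eq_mul]
  ring

theorem trace_S_power_T (l τ : ℂ) (h1 : Complex.sinh (l/2) ≠ 0)
    (h2 : Complex.cosh (l/2) ≠ 0) (h3 : Complex.sinh l ≠ 0) (m : ℤ) :
    (Smat l ^ (-m) * Tmat l τ).trace =
      2 * Complex.cosh (τ/2 + m * l) * (Complex.cosh l / Complex.sinh l) ∧
    (Tmat l τ).trace =
      Complex.cosh (τ/2) *
        (Complex.cosh (l/2) / Complex.sinh (l/2) + Complex.sinh (l/2) / Complex.cosh (l/2)) ∧
    (Tmat l τ).trace = 2 * Complex.cosh (τ/2) * (Complex.cosh l / Complex.sinh l) :=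
  trace_S_power_T_general l τ h3 m
end

section
/- Let λ > 0 be real and τ = t + iθ with t real and θ ∈ (−π, π). Then the Möbius transformation determined by T(λ,τ) maps the circle C₁ = {z ∈ ℂ : |z − i·tanh(λ/2)·tan(θ/2)| = tanh(λ/2)·sec(θ/2)} into the circle C₂ = {z ∈ ℂ : |z + i·coth(λ/2)·tan(θ/2)| = coth(λ/2)·sec(θ/2)}: for every z ∈ C₁ not equal to the pole of T(λ,τ), the point T(λ,τ)·z lies on C₂. -/
/-!
Put `a = tanh(λ/2)`. Then `T(λ,τ)·z = R(z/a)/a`, where `R = hypRot τ` is the Möbius map of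
`[[cosh(τ/2), -sinh(τ/2)], [-sinh(τ/2), cosh(τ/2)]]`, and rescaling by `a` turns `C₁` and
`C₂` into the circles `|w ∓ i·tan(θ/2)| = sec(θ/2)`, which both pass through `±1`.
For `cos ψ > 0` the circle `|w - i·tan ψ| = sec ψ` is the locus
`Re(e^{-iψ}·(1 + w)·conj(1 - w)) = 0`. The map `R` fixes `±1`: with
`d = -sinh(τ/2)·w + cosh(τ/2)` we have `(1 + R w)·d = e^{-τ/2}(1 + w)` and
`(1 - R w)·d = e^{τ/2}(1 - w)`, so `(1 + R w)·conj(1 - R w)` is `e^{-iθ}·(1 + w)·conj(1 - w)`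
divided by the positive real `|d|²`. This turns the equation of the circle for `ψ = θ/2` into
the one for `ψ = -θ/2`.
-/

open Matrix

open Complex ComplexConjugate

lemma re_exp_neg_mul_I_mul (ψ : ℝ) (q : ℂ) :
    (cexp (-(ψ * I)) * q).re = Real.cos ψ * q.re + Real.sin ψ * q.im := by
  rw [mul_re, ← neg_mul, ← ofReal_neg, exp_ofReal_mul_I_re, exp_ofReal_mul_I_im, Real.cos_neg,
    Real.sin_neg]
  ring

lemma re_one_add_mul_conj_one_sub (w : ℂ) : ((1 + w) * conj (1 - w)).re = 1 - normSq w := by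
  simp only [mul_re, add_re, one_re, conj_re, sub_re, add_im, conj_im, one_im, sub_im, normSq_apply]
  ring

lemma im_one_add_mul_conj_one_sub (w : ℂ) : ((1 + w) * conj (1 - w)).im = 2 * w.im := by
  simp only [mul_im, add_re, one_re, conj_re, sub_re, add_im, conj_im, one_im, sub_im]
  ring

lemma re_exp_mul_one_add_mul_conj_one_sub_mul_cos {ψ : ℝ} (hψ : Real.cos ψ ≠ 0) (w : ℂ) :
    (cexp (-(ψ * I)) * ((1 + w) * conj (1 - w))).re * Real.cos ψ =
      1 - (Real.cos ψ * ‖w - I * Real.tan ψ‖) ^ 2 := by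
  have hnorm : ‖w - I * Real.tan ψ‖ ^ 2 = w.re ^ 2 + (w.im - Real.tan ψ) ^ 2 := by
    rw [← normSq_eq_norm_sq, normSq_apply]
    simp only [sub_re, sub_im, mul_re, mul_im, I_re, I_im, ofReal_re, ofReal_im]
    ring
  rw [re_exp_neg_mul_I_mul, re_one_add_mul_conj_one_sub, im_one_add_mul_conj_one_sub, mul_pow,
    hnorm, normSq_apply, Real.tan_eq_sin_div_cos]
  field_simp
  linear_combination Real.sin_sq_add_cos_sq ψ

lemma norm_sub_I_mul_tan_eq_iff {ψ : ℝ} (hψ : 0 < Real.cos ψ) (w : ℂ) :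
    ‖w - I * Real.tan ψ‖ = 1 / Real.cos ψ ↔
      (cexp (-(ψ * I)) * ((1 + w) * conj (1 - w))).re = 0 := by
  rw [← mul_eq_zero_iff_right hψ.ne', re_exp_mul_one_add_mul_conj_one_sub_mul_cos hψ.ne',
    sub_eq_zero, eq_comm (a := (1 : ℝ)), pow_eq_one_iff_of_nonneg (by positivity) two_ne_zero,
    eq_div_iff hψ.ne', mul_comm]

noncomputable def hypRot (τ w : ℂ) : ℂ :=
  (cosh (τ / 2) * w - sinh (τ / 2)) / (-sinh (τ / 2) * w + cosh (τ / 2))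

section hypRot

variable {τ w : ℂ} (hd : -sinh (τ / 2) * w + cosh (τ / 2) ≠ 0)
include hd

lemma one_add_hypRot_mul :
    (1 + hypRot τ w) * (-sinh (τ / 2) * w + cosh (τ / 2)) = cexp (-(τ / 2)) * (1 + w) := by
  rw [hypRot, add_mul, div_mul_cancel₀ _ hd, ← cosh_sub_sinh]; ring

lemma one_sub_hypRot_mul :
    (1 - hypRot τ w) * (-sinh (τ / 2) * w + cosh (τ / 2)) = cexp (τ / 2) * (1 - w) := by
  rw [hypRot, sub_mul, div_mul_cancel₀ _ hd, ← cosh_add_sinh]; ring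

lemma one_add_hypRot_mul_conj_one_sub_mul_normSq :
    (1 + hypRot τ w) * conj (1 - hypRot τ w) * normSq (-sinh (τ / 2) * w + cosh (τ / 2)) =
      cexp (-(τ.im * I)) * ((1 + w) * conj (1 - w)) := by
  have hexp : cexp (-(τ / 2)) * conj (cexp (τ / 2)) = cexp (-(τ.im * I)) := by
    have hdiff := sub_conj τ
    push_cast at hdiff
    rw [← exp_conj, ← Complex.exp_add, map_div₀, map_ofNat]
    congr 1
    linear_combination (-1 / 2 : ℂ) * hdiff
  set d := -sinh (τ / 2) * w + cosh (τ / 2)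
  calc (1 + hypRot τ w) * conj (1 - hypRot τ w) * normSq d
      = ((1 + hypRot τ w) * d) * conj ((1 - hypRot τ w) * d) := by
        rw [← mul_conj, map_mul]; ring
    _ = cexp (-(τ / 2)) * (1 + w) * conj (cexp (τ / 2) * (1 - w)) := by
        rw [one_add_hypRot_mul hd, one_sub_hypRot_mul hd]
    _ = cexp (-(τ.im * I)) * ((1 + w) * conj (1 - w)) := by
        rw [map_mul, ← hexp]; ring

end hypRot

lemma norm_hypRot_add_I_mul_tan {ψ : ℝ} (hψ : 0 < Real.cos ψ) {τ w : ℂ}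
    (hτ : τ.im = 2 * ψ) (hd : -sinh (τ / 2) * w + cosh (τ / 2) ≠ 0)
    (hw : ‖w - I * Real.tan ψ‖ = 1 / Real.cos ψ) :
    ‖hypRot τ w + I * Real.tan ψ‖ = 1 / Real.cos ψ := by
  have hψ' : 0 < Real.cos (-ψ) := by rwa [Real.cos_neg]
  have h := (norm_sub_I_mul_tan_eq_iff hψ w).1 hw
  have hpos : 0 < normSq (-sinh (τ / 2) * w + cosh (τ / 2)) := normSq_pos.2 hd
  suffices (cexp (-((-ψ : ℝ) * I)) * ((1 + hypRot τ w) * conj (1 - hypRot τ w))).re = 0 by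
    simpa [Real.tan_neg, Real.cos_neg, sub_eq_add_neg] using
      (norm_sub_I_mul_tan_eq_iff hψ' (hypRot τ w)).2 this
  rw [← mul_eq_zero_iff_right hpos.ne', ← re_mul_ofReal, mul_assoc,
    one_add_hypRot_mul_conj_one_sub_mul_normSq hd, ← mul_assoc, ← Complex.exp_add, hτ]
  convert h using 5
  push_cast; ring

lemma Tmat_eq (l τ : ℂ) :
    Tmat l τ = !![cosh (τ / 2) * (tanh (l / 2))⁻¹, -sinh (τ / 2);
      -sinh (τ / 2), cosh (τ / 2) * tanh (l / 2)] := by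
  rw [Tmat, tanh_eq_sinh_div_cosh, inv_div]

section Tmat

variable {l : ℂ} (τ z : ℂ) (ha : tanh (l / 2) ≠ 0)
include ha

lemma Tmat_denom_eq : Tmat l τ 1 0 * z + Tmat l τ 1 1 =
    tanh (l / 2) * (-sinh (τ / 2) * (z / tanh (l / 2)) + cosh (τ / 2)) := by
  simp only [Tmat_eq, of_apply, cons_val', cons_val_zero, cons_val_fin_one, cons_val_one]
  field_simp

lemma Tmat_mobius_eq :
    (Tmat l τ 0 0 * z + Tmat l τ 0 1) / (Tmat l τ 1 0 * z + Tmat l τ 1 1) =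
      hypRot τ (z / tanh (l / 2)) / tanh (l / 2) := by
  rw [Tmat_denom_eq τ z ha, hypRot, div_div, mul_comm (tanh _)]
  congr 1
  simp only [Tmat_eq, of_apply, cons_val', cons_val_zero, cons_val_fin_one, cons_val_one]
  field_simp
  ring

end Tmat

theorem T_maps_circle_to_circle (l t θ : ℝ) (hl : 0 < l) (hθ : θ ∈ Set.Ioo (-Real.pi) Real.pi)
    (z : ℂ)
    (hz : ‖z - Complex.I * (Real.tanh (l/2) * Real.tan (θ/2))‖ =
      Real.tanh (l/2) * (1 / Real.cos (θ/2)))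
    (hpole : Tmat l ((t : ℂ) + θ * Complex.I) 1 0 * z +
      Tmat l ((t : ℂ) + θ * Complex.I) 1 1 ≠ 0) :
    ‖(Tmat l ((t : ℂ) + θ * Complex.I) 0 0 * z + Tmat l ((t : ℂ) + θ * Complex.I) 0 1) /
            (Tmat l ((t : ℂ) + θ * Complex.I) 1 0 * z + Tmat l ((t : ℂ) + θ * Complex.I) 1 1) +
          Complex.I * ((Real.cosh (l/2) / Real.sinh (l/2)) * Real.tan (θ/2))‖ =
      (Real.cosh (l/2) / Real.sinh (l/2)) * (1 / Real.cos (θ/2)) := by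
  set τ : ℂ := t + θ * I
  have ha : 0 < Real.tanh (l / 2) := by
    rw [Real.tanh_eq_sinh_div_cosh]
    exact div_pos (Real.sinh_pos_iff.2 (by linarith)) (Real.cosh_pos _)
  have haC : tanh ((l : ℂ) / 2) = Real.tanh (l / 2) := by rw [ofReal_tanh]; push_cast; rfl
  have hcoth : Real.cosh (l / 2) / Real.sinh (l / 2) = (Real.tanh (l / 2))⁻¹ := by
    rw [Real.tanh_eq_sinh_div_cosh, inv_div]
  set a := Real.tanh (l / 2)
  have hψ : 0 < Real.cos (θ / 2) :=
    Real.cos_pos_of_mem_Ioo ⟨by linarith [hθ.1], by linarith [hθ.2]⟩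
  have ha0 : (a : ℂ) ≠ 0 := ofReal_ne_zero.2 ha.ne'
  rw [Tmat_denom_eq τ z (by rwa [haC]), haC] at hpole
  have hw : ‖z / a - I * Real.tan (θ / 2)‖ = 1 / Real.cos (θ / 2) := by
    rw [show z / a - I * Real.tan (θ / 2) = (z - I * (a * Real.tan (θ / 2))) / a by field_simp,
      norm_div, norm_real, Real.norm_of_nonneg ha.le, hz, mul_div_cancel_left₀ _ ha.ne']
  have hτ : τ.im = 2 * (θ / 2) := by rw [mul_div_cancel₀ _ two_ne_zero]; simp [τ]
  have hcirc := norm_hypRot_add_I_mul_tan hψ hτ (right_ne_zero_of_mul hpole) hw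
  rw [Tmat_mobius_eq τ z (by rwa [haC]), haC, ← ofReal_div, hcoth, ofReal_inv,
    show hypRot τ (z / a) / a + I * ((a : ℂ)⁻¹ * Real.tan (θ / 2)) =
      (hypRot τ (z / a) + I * Real.tan (θ / 2)) / a by field_simp,
    norm_div, hcirc, norm_real, Real.norm_of_nonneg ha.le]
  ring
end

section
/- Let λ > 0 be real and θ ∈ (−π, π). Then the Möbius transformation determined by S(λ) maps the circle C₂ = {z ∈ ℂ : |z + i·coth(λ/2)·tan(θ/2)| = coth(λ/2)·sec(θ/2)} into itself, and the Möbius transformation determined by S'(λ) maps the circle C₁ = {z ∈ ℂ : |z − i·tanh(λ/2)·tan(θ/2)| = tanh(λ/2)·sec(θ/2)} into itself (away from the respective poles). -/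
/-!
Both matrices are real, of determinant 1 and of the form `[[c, β], [γ, c]]` with `β = k²γ`, where
`k = coth(λ/2)` for `S(λ)` and `k = tanh(λ/2)` for `S'(λ)`; their Möbius maps fix `±k`. For such a
map `w = (cz + β)/(γz + c)` one has `|cz + β|² - k²|γz + c|² = |z|² - k²` and
`Im w = Im z / |γz + c|²`, so `|w|² - 2a Im w - k² = (|z|² - 2a Im z - k²) / |γz + c|²`.
The zero set of `|z|² - 2a Im z - k²` is the circle `|z - ia|² = a² + k²` through `±k`, hence it is
mapped into itself; `C₁` and `C₂` are such circles because `sec² = 1 + tan²`.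
-/

open Matrix

section Moebius

open Complex

lemma im_linear_div_linear (α β γ δ : ℝ) (z : ℂ) :
    ((α * z + β) / (γ * z + δ)).im = (α * δ - β * γ) * z.im / normSq (γ * z + δ) := by
  rw [div_im]
  simp only [add_re, add_im, mul_re, mul_im, ofReal_re, ofReal_im]
  ring

lemma norm_sub_I_mul_sq (z : ℂ) (a : ℝ) :
    ‖z - I * a‖ ^ 2 = normSq z - 2 * a * z.im + a ^ 2 := by
  rw [← normSq_eq_norm_sq, normSq_apply, normSq_apply]
  simp only [sub_re, sub_im, mul_re, mul_im, I_re, I_im, ofReal_re, ofReal_im]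
  ring

variable {c β γ k : ℝ}

lemma normSq_sub_sq_mul_normSq (hdet : c ^ 2 - β * γ = 1) (hfix : k ^ 2 * γ = β) (z : ℂ) :
    normSq (c * z + β) - k ^ 2 * normSq (γ * z + c) = normSq z - k ^ 2 := by
  simp only [normSq_apply, add_re, add_im, mul_re, mul_im, ofReal_re, ofReal_im]
  subst hfix
  linear_combination (z.re * z.re + z.im * z.im - k ^ 2) * hdet

lemma norm_moebius_sub_I_mul_eq {a r : ℝ} (hdet : c ^ 2 - β * γ = 1) (hfix : k ^ 2 * γ = β)
    (hr : r ^ 2 = a ^ 2 + k ^ 2) {z : ℂ} (hz : ‖z - I * a‖ = r) (hD : γ * z + c ≠ 0) :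
    ‖(c * z + β) / (γ * z + c) - I * a‖ = r := by
  have hN : normSq (γ * z + c) ≠ 0 := normSq_eq_zero.not.2 hD
  have hcirc : normSq z - 2 * a * z.im = k ^ 2 := by
    linarith [norm_sub_I_mul_sq z a, hz ▸ hr]
  have hw : normSq ((c * z + β) / (γ * z + c)) - 2 * a * ((c * z + β) / (γ * z + c)).im
      = k ^ 2 := by
    rw [normSq_div, im_linear_div_linear, ← sq, hdet, one_mul, mul_div_assoc', div_sub_div_same,
      div_eq_iff hN]
    linear_combination normSq_sub_sq_mul_normSq hdet hfix z + hcirc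
  have hr0 : 0 ≤ r := hz ▸ norm_nonneg _
  rw [← sq_eq_sq₀ (norm_nonneg _) hr0, norm_sub_I_mul_sq, hr]
  linarith

end Moebius

open Real

lemma cosh_eq_cosh_half_sq_add_sinh_half_sq (x : ℝ) :
    cosh x = cosh (x / 2) ^ 2 + sinh (x / 2) ^ 2 := by
  rw [← cosh_two_mul, mul_div_cancel₀ x two_ne_zero]

lemma coth_half_sq_mul_cosh_sub_one {x : ℝ} (hx : x ≠ 0) :
    (cosh (x / 2) / sinh (x / 2)) ^ 2 * (cosh x - 1) = cosh x + 1 := by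
  have hs : sinh (x / 2) ≠ 0 := sinh_ne_zero.2 (div_ne_zero hx two_ne_zero)
  rw [cosh_eq_cosh_half_sq_add_sinh_half_sq x, div_pow, div_mul_eq_mul_div,
    div_eq_iff (pow_ne_zero 2 hs)]
  linear_combination (cosh (x / 2) ^ 2 + sinh (x / 2) ^ 2) * cosh_sq_sub_sinh_sq (x / 2)

lemma tanh_half_sq_mul_cosh_add_one (x : ℝ) : tanh (x / 2) ^ 2 * (cosh x + 1) = cosh x - 1 := by
  rw [cosh_eq_cosh_half_sq_add_sinh_half_sq x, tanh_eq_sinh_div_cosh, div_pow, div_mul_eq_mul_div,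
    div_eq_iff (pow_ne_zero 2 (cosh_pos _).ne')]
  linear_combination (-(cosh (x / 2) ^ 2 + sinh (x / 2) ^ 2)) * cosh_sq_sub_sinh_sq (x / 2)

lemma mul_sec_sq {t : ℝ} (ht : cos t ≠ 0) (k : ℝ) :
    (k * (1 / cos t)) ^ 2 = (k * tan t) ^ 2 + k ^ 2 := by
  rw [tan_eq_sin_div_cos]
  field_simp
  linear_combination (-k ^ 2) * sin_sq_add_cos_sq t

theorem S_preserves_circles (l θ : ℝ) (hl : 0 < l) (hθ : θ ∈ Set.Ioo (-Real.pi) Real.pi) :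
    (∀ z : ℂ,
      norm (z + Complex.I * ((Real.cosh (l/2) / Real.sinh (l/2)) * Real.tan (θ/2))) =
        (Real.cosh (l/2) / Real.sinh (l/2)) * (1 / Real.cos (θ/2)) →
      Smat l 1 0 * z + Smat l 1 1 ≠ 0 →
      norm ((Smat l 0 0 * z + Smat l 0 1) / (Smat l 1 0 * z + Smat l 1 1) +
          Complex.I * ((Real.cosh (l/2) / Real.sinh (l/2)) * Real.tan (θ/2))) =
        (Real.cosh (l/2) / Real.sinh (l/2)) * (1 / Real.cos (θ/2))) ∧
    (∀ z : ℂ,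
      norm (z - Complex.I * (Real.tanh (l/2) * Real.tan (θ/2))) =
        Real.tanh (l/2) * (1 / Real.cos (θ/2)) →
      Smat' l 1 0 * z + Smat' l 1 1 ≠ 0 →
      norm ((Smat' l 0 0 * z + Smat' l 0 1) / (Smat' l 1 0 * z + Smat' l 1 1) -
          Complex.I * (Real.tanh (l/2) * Real.tan (θ/2))) =
        Real.tanh (l/2) * (1 / Real.cos (θ/2))) := by
  have hcos : cos (θ / 2) ≠ 0 :=
    (cos_pos_of_mem_Ioo ⟨by linarith [hθ.1], by linarith [hθ.2]⟩).ne'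
  refine ⟨fun z hz hD => ?_, fun z hz hD => ?_⟩
  · have := norm_moebius_sub_I_mul_eq (c := cosh l) (β := cosh l + 1) (γ := cosh l - 1)
      (a := -(cosh (l / 2) / sinh (l / 2) * tan (θ / 2)))
      (r := cosh (l / 2) / sinh (l / 2) * (1 / cos (θ / 2))) (by ring)
      (coth_half_sq_mul_cosh_sub_one hl.ne') (by rw [neg_sq]; exact mul_sec_sq hcos _)
      (z := z) (by simpa using hz) (by simpa [Smat] using hD)
    simpa [Smat] using this
  · have := norm_moebius_sub_I_mul_eq (c := cosh l) (β := cosh l - 1) (γ := cosh l + 1)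
      (a := tanh (l / 2) * tan (θ / 2)) (r := tanh (l / 2) * (1 / cos (θ / 2))) (by ring)
      (tanh_half_sq_mul_cosh_add_one l) (mul_sec_sq hcos _)
      (z := z) (by simpa using hz) (by simpa [Smat'] using hD)
    simpa [Smat'] using this
end

section
/- Let λ > 0 be real and θ ∈ (0, π). Then the circles C₁ = {z ∈ ℂ : |z − i·tanh(λ/2)·tan(θ/2)| = tanh(λ/2)·sec(θ/2)} and C₂ = {z ∈ ℂ : |z + i·coth(λ/2)·tan(θ/2)| = coth(λ/2)·sec(θ/2)} are disjoint if and only if cos(θ/2) > tanh(λ) (equivalently, sin(θ/2) < sech(λ)); moreover when they are disjoint, C₁ lies in the open disc bounded by C₂. -/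
/-!
With `t = tanh (λ/2)` and `T = tan (θ/2)`, the circles have centres `i t T` and `-i t⁻¹ T`,
at distance `d = (t + t⁻¹) T`, and radii `r₁ = t sec (θ/2) < r₂ = t⁻¹ sec (θ/2)`, with
`d ≤ r₁ + r₂`. Two such circles either meet (intermediate value theorem on the connected circle
`C₁`) or `C₁` lies inside `C₂`, the latter exactly when `d + r₁ < r₂`. Clearing denominators this
reads `sin (θ/2) < (1 - t²) / (1 + t²) = sech λ`, which is equivalent to `cos (θ/2) > tanh λ`
because `cos² + sin² = 1 = tanh² + sech²`.
-/

open Metric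

theorem lt_iff_lt_of_sq_add_sq_eq {a b c d : ℝ} (ha : 0 ≤ a) (hb : 0 ≤ b) (hc : 0 ≤ c)
    (hd : 0 ≤ d) (h : a ^ 2 + b ^ 2 = c ^ 2 + d ^ 2) : a < c ↔ d < b := by
  rw [← pow_lt_pow_iff_left₀ ha hc two_ne_zero, ← pow_lt_pow_iff_left₀ hd hb two_ne_zero]
  constructor <;> intro <;> linarith

namespace Real

theorem tanh_pos {x : ℝ} (hx : 0 < x) : 0 < tanh x := by
  rw [tanh_eq_sinh_div_cosh]
  exact div_pos (sinh_pos_iff.2 hx) (cosh_pos x)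

theorem tanh_sq_add_one_div_cosh_sq (x : ℝ) : tanh x ^ 2 + (1 / cosh x) ^ 2 = 1 := by
  have := cosh_pos x
  rw [tanh_eq_sinh_div_cosh]
  field_simp
  rw [cosh_sq x]

theorem one_div_cosh_two_mul (x : ℝ) :
    1 / cosh (2 * x) = (1 - tanh x ^ 2) / (1 + tanh x ^ 2) := by
  have := cosh_pos x
  rw [cosh_two_mul, tanh_eq_sinh_div_cosh]
  field_simp
  rw [cosh_sq x]
  ring

theorem tanh_lt_cos_iff_sin_lt_one_div_cosh {x y : ℝ} (hx : 0 ≤ x) (hcos : 0 ≤ cos y)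
    (hsin : 0 ≤ sin y) : tanh x < cos y ↔ sin y < 1 / cosh x := by
  refine lt_iff_lt_of_sq_add_sq_eq ?_ (by positivity) hcos hsin
    (by rw [tanh_sq_add_one_div_cosh_sq, cos_sq_add_sin_sq])
  rw [tanh_eq_sinh_div_cosh]
  exact div_nonneg (sinh_nonneg_iff.2 hx) (cosh_pos x).le

end Real

section Spheres

theorem sphere_subset_ball_of_dist_add_lt {X : Type*} [PseudoMetricSpace X] {c₁ c₂ : X}
    {r₁ r₂ : ℝ} (h : dist c₁ c₂ + r₁ < r₂) : sphere c₁ r₁ ⊆ ball c₂ r₂ :=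
  sphere_subset_closedBall.trans (closedBall_subset_ball' (by linarith))

variable {E : Type*} [NormedAddCommGroup E] [NormedSpace ℝ E]

theorem exists_norm_eq_one_and_eq_norm_smul [Nontrivial E] (v : E) :
    ∃ u : E, ‖u‖ = 1 ∧ v = ‖v‖ • u := by
  rcases eq_or_ne v 0 with rfl | hv
  · obtain ⟨u, hu⟩ := exists_norm_eq E zero_le_one
    exact ⟨u, hu, by simp⟩
  · exact ⟨‖v‖⁻¹ • v, norm_smul_inv_norm hv, by rw [smul_inv_smul₀ (norm_ne_zero_iff.2 hv)]⟩

/-- Intermediate value theorem for `dist · c₂` on the connected sphere `sphere c₁ r₁`, between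
its points `c₁ ∓ r₁ • u` nearest to and farthest from `c₂`. -/
theorem sphere_inter_sphere_nonempty (hE : 1 < Module.rank ℝ E) {c₁ c₂ : E} {r₁ r₂ : ℝ}
    (hr₁ : 0 ≤ r₁) (h_near : |dist c₁ c₂ - r₁| ≤ r₂) (h_far : r₂ ≤ dist c₁ c₂ + r₁) :
    (sphere c₁ r₁ ∩ sphere c₂ r₂).Nonempty := by
  have : Nontrivial E := rank_pos_iff_nontrivial.1 (zero_lt_one.trans hE)
  obtain ⟨u, hu, hcu⟩ := exists_norm_eq_one_and_eq_norm_smul (c₁ - c₂)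
  have hdist (a : ℝ) : dist (c₁ + a • u) c₂ = |dist c₁ c₂ + a| := by
    rw [dist_eq_norm, add_sub_right_comm, hcu, ← add_smul, norm_smul, hu, mul_one,
      Real.norm_eq_abs, dist_eq_norm]
  have hmem (a : ℝ) (ha : |a| = r₁) : c₁ + a • u ∈ sphere c₁ r₁ := by
    rw [mem_sphere_iff_norm, add_sub_cancel_left, norm_smul, hu, mul_one, Real.norm_eq_abs, ha]
  exact (isPreconnected_sphere hE c₁ r₁).intermediate_value
    (hmem (-r₁) (by rw [abs_neg, abs_of_nonneg hr₁])) (hmem r₁ (abs_of_nonneg hr₁))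
    (by fun_prop : Continuous (dist · c₂)).continuousOn
    (show r₂ ∈ Set.Icc _ _ by
      rw [hdist, hdist, ← sub_eq_add_neg, abs_of_nonneg (by positivity : 0 ≤ dist c₁ c₂ + r₁)]
      exact ⟨h_near, h_far⟩)

theorem disjoint_sphere_sphere_iff (hE : 1 < Module.rank ℝ E) {c₁ c₂ : E} {r₁ r₂ : ℝ}
    (hr₁ : 0 ≤ r₁) (hr : r₁ ≤ r₂) (hd : dist c₁ c₂ ≤ r₁ + r₂) :
    Disjoint (sphere c₁ r₁) (sphere c₂ r₂) ↔ dist c₁ c₂ + r₁ < r₂ := by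
  refine ⟨fun h => ?_, fun h => sphere_disjoint_ball.symm.mono_left
    (sphere_subset_ball_of_dist_add_lt h)⟩
  by_contra! h_far
  refine Set.not_nonempty_iff_eq_empty.2 (Set.disjoint_iff_inter_eq_empty.1 h)
    (sphere_inter_sphere_nonempty hE hr₁ ?_ h_far)
  rw [abs_le]
  constructor <;> linarith [dist_nonneg (x := c₁) (y := c₂)]

end Spheres

theorem Complex.dist_I_mul_neg_I_mul {a b : ℝ} (ha : 0 ≤ a) (hb : 0 ≤ b) :
    dist (I * a) (-(I * b)) = a + b := by
  rw [dist_eq_norm, sub_neg_eq_add, ← mul_add, norm_mul, norm_I, one_mul, ← ofReal_add,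
    norm_real, Real.norm_of_nonneg (by positivity)]

theorem dist_add_lt_iff_lt_one_sub_sq_div_one_add_sq {t s c : ℝ} (ht : 0 < t) (hs : 0 ≤ s)
    (hc : 0 < c) :
    dist (Complex.I * ↑(t * (s / c))) (-(Complex.I * ↑(t⁻¹ * (s / c)))) + t * (1 / c) <
        t⁻¹ * (1 / c) ↔ s < (1 - t ^ 2) / (1 + t ^ 2) := by
  have e₁ : t * (s / c) + t⁻¹ * (s / c) + t * (1 / c) = (s * (1 + t ^ 2) + t ^ 2) / (t * c) := by
    field_simp; ring
  have e₂ : t⁻¹ * (1 / c) = 1 / (t * c) := by field_simp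
  rw [Complex.dist_I_mul_neg_I_mul (by positivity) (by positivity), e₁, e₂,
    div_lt_div_iff_of_pos_right (by positivity), lt_div_iff₀ (by positivity)]
  constructor <;> intro <;> linarith

theorem circles_disjoint_iff (l θ : ℝ) (hl : 0 < l) (hθ : θ ∈ Set.Ioo 0 Real.pi) :
    (({z : ℂ | ‖z - Complex.I * (Real.tanh (l/2) * Real.tan (θ/2))‖ =
          Real.tanh (l/2) * (1 / Real.cos (θ/2))} ∩
        {z : ℂ | ‖z + Complex.I * ((Real.cosh (l/2) / Real.sinh (l/2)) * Real.tan (θ/2))‖ =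
          (Real.cosh (l/2) / Real.sinh (l/2)) * (1 / Real.cos (θ/2))}) = ∅
      ↔ Real.cos (θ/2) > Real.tanh l) ∧
    (Real.cos (θ/2) > Real.tanh l ↔ Real.sin (θ/2) < 1 / Real.cosh l) ∧
    (Real.cos (θ/2) > Real.tanh l →
      ∀ z : ℂ,
        ‖z - Complex.I * (Real.tanh (l/2) * Real.tan (θ/2))‖ =
          Real.tanh (l/2) * (1 / Real.cos (θ/2)) →
        ‖z + Complex.I * ((Real.cosh (l/2) / Real.sinh (l/2)) * Real.tan (θ/2))‖ <
          (Real.cosh (l/2) / Real.sinh (l/2)) * (1 / Real.cos (θ/2))) := by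
  obtain ⟨hθ₀, hθπ⟩ := hθ
  have hs : 0 < Real.sin (θ/2) := Real.sin_pos_of_pos_of_lt_pi (by linarith) (by linarith)
  have hc : 0 < Real.cos (θ/2) := Real.cos_pos_of_mem_Ioo ⟨by linarith, by linarith⟩
  have hsech := Real.tanh_lt_cos_iff_sin_lt_one_div_cosh hl.le hc.le hs.le
  have hsech_half : 1 / Real.cosh l = (1 - Real.tanh (l/2) ^ 2) / (1 + Real.tanh (l/2) ^ 2) := by
    rw [← Real.one_div_cosh_two_mul, mul_div_cancel₀ l two_ne_zero]
  have hcoth : Real.cosh (l/2) / Real.sinh (l/2) = (Real.tanh (l/2))⁻¹ := by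
    rw [Real.tanh_eq_sinh_div_cosh, inv_div]
  have ht := Real.tanh_pos (half_pos hl)
  have ht₁ := Real.tanh_lt_one (l/2)
  simp only [← Complex.ofReal_div, ← Complex.ofReal_mul, hcoth, Real.tan_eq_sin_div_cos]
  set t := Real.tanh (l/2)
  set s := Real.sin (θ/2)
  set c := Real.cos (θ/2)
  have hnested := hsech.trans
    (hsech_half ▸ (dist_add_lt_iff_lt_one_sub_sq_div_one_add_sq ht hs.le hc).symm)
  have hr : t * (1 / c) ≤ t⁻¹ * (1 / c) := by
    gcongr
    exact ht₁.le.trans ((one_le_inv₀ ht).2 ht₁.le)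
  have hd : t * (s / c) + t⁻¹ * (s / c) ≤ t * (1 / c) + t⁻¹ * (1 / c) := by
    gcongr <;> exact Real.sin_le_one _
  rw [← Complex.dist_I_mul_neg_I_mul (by positivity) (by positivity)] at hd
  have hnorm_add (z w : ℂ) : ‖z + w‖ = dist z (-w) := by rw [dist_eq_norm, sub_neg_eq_add]
  simp only [hnorm_add, ← dist_eq_norm]
  exact ⟨Set.disjoint_iff_inter_eq_empty.symm.trans
    ((disjoint_sphere_sphere_iff (by simp [Complex.rank_real_complex]) (by positivity) hr
      hd).trans hnested.symm),
    hsech, fun h z hz => sphere_subset_ball_of_dist_add_lt (hnested.1 h) hz⟩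
end
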